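/- arXiv:2312.03962 — 4 statements merged into one kernel-verified Lean document; each statement's English description precedes it below -/
import Mathlib

section
/- For all real w and all δ > 0, the inequality |(δ + w²)(1 + δ − w²) / (2(1 + δ + w²)²) − w²(1 − w²)/(2(1 + w²)²)| ≤ √δ / 2 holds. -/
theorem stmt_0 (w δ : ℝ) (hδ : 0 < δ) :
    |(δ + w^2) * (1 + δ - w^2) / (2 * (1 + δ + w^2)^2)
      - w^2 * (1 - w^2) / (2 * (1 + w^2)^2)| ≤ Real.sqrt δ / 2 := by
  have hw : (0:ℝ) ≤ w^2 := sq_nonneg w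
  set s := Real.sqrt δ with hs
  have hs0 : 0 < s := Real.sqrt_pos.mpr hδ
  have hs2 : s^2 = δ := Real.sq_sqrt hδ.le
  have hD1 : (0:ℝ) < 2*(1+δ+w^2)^2 := by positivity
  have hD2 : (0:ℝ) < 2*(1+w^2)^2 := by positivity
  have hmons : (0:ℝ) ≤ δ*w^2 ∧ (0:ℝ) ≤ δ*w^2*w^2 ∧ (0:ℝ) ≤ δ*w^2*w^2*w^2 ∧
      (0:ℝ) ≤ δ*δ*w^2 ∧ (0:ℝ) ≤ δ*δ*w^2*w^2 := by
    refine ⟨by positivity, by positivity, by positivity, by positivity, by positivity⟩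
  obtain ⟨m1, m2, m3, m4, m5⟩ := hmons
  rw [div_sub_div _ _ (ne_of_gt hD1) (ne_of_gt hD2), abs_div,
    abs_of_pos (by positivity : (0:ℝ) < 2*(1+δ+w^2)^2 * (2*(1+w^2)^2)),
    div_le_div_iff₀ (by positivity) two_pos, abs_of_nonneg (by nlinarith)]
  have hkey : 2*s ≤ 1+δ+w^2 := by nlinarith [sq_nonneg (1-s)]
  have hnum : (δ + w^2) * (1 + δ - w^2) * (2*(1+w^2)^2)
      - 2*(1+δ+w^2)^2 * (w^2 * (1 - w^2)) ≤ 4*δ*(1+δ+w^2)*(1+w^2)^2 := by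
    nlinarith
  have t1 : 8*δ ≤ 4*s*(1+δ+w^2) := by
    nlinarith [mul_le_mul_of_nonneg_left hkey (by positivity : (0:ℝ) ≤ 4*s)]
  have h2 : 8*δ*(1+δ+w^2)*(1+w^2)^2 ≤ s * (2*(1+δ+w^2)^2 * (2*(1+w^2)^2)) := by
    nlinarith [mul_le_mul_of_nonneg_right t1
      (by positivity : (0:ℝ) ≤ (1+δ+w^2)*(1+w^2)^2)]
  nlinarith [hnum, h2, mul_nonneg hδ.le (sq_nonneg (1+w^2)),
    mul_nonneg (mul_nonneg hδ.le hw) (sq_nonneg (1+w^2))]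
end

section
/- For all real w and all δ > 0, |(1 + δ)/(1 + δ + w²) − 1/(1 + w²)| ≤ √δ / 2. -/
theorem stmt_2 (w δ : ℝ) (hδ : 0 < δ) :
    |(1 + δ) / (1 + δ + w^2) - 1 / (1 + w^2)| ≤ Real.sqrt δ / 2 := by
  have h1 : (0:ℝ) < 1 + δ + w^2 := by positivity
  have h2 : (0:ℝ) < 1 + w^2 := by positivity
  have key : (1 + δ) / (1 + δ + w^2) - 1 / (1 + w^2)
      = δ * w^2 / ((1 + δ + w^2) * (1 + w^2)) := by
    field_simp; ring
  rw [key, abs_of_nonneg (by positivity), div_le_div_iff₀ (by positivity) (by norm_num)]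
  have hs : Real.sqrt δ ^ 2 = δ := Real.sq_sqrt hδ.le
  have hs0 : 0 < Real.sqrt δ := Real.sqrt_pos.mpr hδ
  nlinarith [sq_nonneg (Real.sqrt δ - w^2), mul_nonneg hs0.le (sq_nonneg (Real.sqrt δ - w^2)),
    mul_nonneg hs0.le (sq_nonneg w), mul_pos hs0 (mul_pos h1 h2)]
end

section
/- Let a > 0, k ≥ 0, 0 ≤ b ≤ k, ψ* = arctan(−b/a), and δ₁ = a/(2√(a² + k²)). Then for all ψ with |ψ − ψ*| < δ₁, cos ψ (b cos ψ + a sin ψ)(ψ − ψ*) ≥ (a/2)(ψ − ψ*)². -/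
/-!
Put `t = ψ - ψ*`. Since `a sin ψ* + b cos ψ* = 0`, the angle-addition formulas turn the left-hand
side into `sin t (a cos t + b sin t) t`. Its main part `a t sin t cos t` is at least `a (t² - 2t⁴/3)`
by `|x - sin x| ≤ |x|³/6` at `x = 2t`, while `|b t sin² t| ≤ k |t|³`. The constraint
`|t| < a / (2√(a² + k²))` is what makes `a t² + k |t| ≤ a/2`, which absorbs both errors.
-/

open Real

theorem sq_sub_pow_four_div_six_le_mul_sin (x : ℝ) : x ^ 2 - x ^ 4 / 6 ≤ x * sin x := by
  have h : x * (x - sin x) ≤ x ^ 4 / 6 :=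
    calc x * (x - sin x) ≤ |x| * |x - sin x| := by rw [← abs_mul]; exact le_abs_self _
      _ ≤ |x| * (|x| ^ 3 / 6) := by gcongr; exact abs_sub_sin_le x
      _ = (|x| ^ 2) ^ 2 / 6 := by ring
      _ = x ^ 4 / 6 := by rw [sq_abs]; ring
  linarith

theorem sq_sub_le_mul_sin_mul_cos (t : ℝ) : t ^ 2 - 2 / 3 * t ^ 4 ≤ t * sin t * cos t := by
  have h := sq_sub_pow_four_div_six_le_mul_sin (2 * t)
  rw [sin_two_mul] at h
  linear_combination h / 4

theorem neg_mul_sq_mul_abs_le_mul_sin_sq_mul {b : ℝ} (hb : 0 ≤ b) (t : ℝ) :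
    -(b * t ^ 2 * |t|) ≤ b * sin t ^ 2 * t := by
  have h₁ : b * sin t ^ 2 * -|t| ≤ b * sin t ^ 2 * t :=
    mul_le_mul_of_nonneg_left (neg_abs_le t) (by positivity)
  have h₂ : b * sin t ^ 2 * |t| ≤ b * t ^ 2 * |t| :=
    mul_le_mul_of_nonneg_right (mul_le_mul_of_nonneg_left sin_sq_le_sq hb) (abs_nonneg t)
  linarith

theorem cos_add_mul_eq_sin_mul {a b c : ℝ} (h : a * sin c + b * cos c = 0) (t : ℝ) :
    cos (c + t) * (b * cos (c + t) + a * sin (c + t)) = sin t * (a * cos t + b * sin t) := by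
  rw [cos_add, sin_add]
  linear_combination
    ((cos c * cos t - sin c * sin t) * cos t - sin c * sin t * cos t - cos c * sin t ^ 2) * h
      + (a * cos t + b * sin t) * sin t * sin_sq_add_cos_sq c

theorem mul_sin_arctan_add_mul_cos_arctan {a : ℝ} (ha : a ≠ 0) (b : ℝ) :
    a * sin (arctan (-b / a)) + b * cos (arctan (-b / a)) = 0 := by
  have htan := tan_arctan (-b / a)
  rw [tan_eq_sin_div_cos, div_eq_iff (cos_arctan_pos _).ne'] at htan
  rw [htan]
  field_simp
  ring

theorem mul_sq_add_mul_le_half {a k s : ℝ} (ha : 0 < a) (hk : 0 ≤ k) (hs : 0 ≤ s)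
    (h : 2 * √(a ^ 2 + k ^ 2) * s ≤ a) : a * s ^ 2 + k * s ≤ a / 2 := by
  set r := √(a ^ 2 + k ^ 2)
  have hr2 : r ^ 2 = a ^ 2 + k ^ 2 := sq_sqrt (by positivity)
  have hr : 0 < r := by positivity
  -- `2r² - a² - 2kr = (r - k)²` once `r² = a² + k²`.
  have key : 4 * r ^ 2 * (a * s ^ 2 + k * s) ≤ 4 * r ^ 2 * (a / 2) := by
    nlinarith [mul_le_mul_of_nonneg_left (mul_self_le_mul_self (by positivity) h) ha.le,
      mul_le_mul_of_nonneg_left h (by positivity : 0 ≤ 2 * k * r),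
      mul_nonneg ha.le (sq_nonneg (r - k))]
  exact le_of_mul_le_mul_left key (by positivity)

theorem half_mul_sq_le_sin_mul_mul {a b k t : ℝ} (ha : 0 < a) (hb : 0 ≤ b) (hbk : b ≤ k)
    (ht : 2 * √(a ^ 2 + k ^ 2) * |t| ≤ a) :
    a / 2 * t ^ 2 ≤ sin t * (a * cos t + b * sin t) * t := by
  have hsmall : a * t ^ 2 + k * |t| ≤ a / 2 := by
    simpa only [sq_abs] using mul_sq_add_mul_le_half ha (hb.trans hbk) (abs_nonneg t) ht
  have hcos := mul_le_mul_of_nonneg_left (sq_sub_le_mul_sin_mul_cos t) ha.le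
  have hsin := neg_mul_sq_mul_abs_le_mul_sin_sq_mul hb t
  calc a / 2 * t ^ 2 = a * t ^ 2 - t ^ 2 * (a / 2) := by ring
    _ ≤ a * t ^ 2 - t ^ 2 * (a * t ^ 2 + k * |t|) := by gcongr
    _ ≤ a * (t ^ 2 - 2 / 3 * t ^ 4) - b * t ^ 2 * |t| := by
        nlinarith [mul_nonneg ha.le (pow_nonneg (sq_nonneg t) 2),
          mul_nonneg (sub_nonneg.2 hbk) (mul_nonneg (sq_nonneg t) (abs_nonneg t))]
    _ ≤ a * (t * sin t * cos t) + b * sin t ^ 2 * t := by linarith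
    _ = sin t * (a * cos t + b * sin t) * t := by ring

theorem stmt_13_general (a k b : ℝ) (ha : 0 < a) (hb0 : 0 ≤ b) (hbk : b ≤ k)
    (ψ : ℝ) (hψ : |ψ - Real.arctan (-b/a)| < a / (2 * Real.sqrt (a^2 + k^2))) :
    Real.cos ψ * (b * Real.cos ψ + a * Real.sin ψ) * (ψ - Real.arctan (-b/a))
      ≥ (a/2) * (ψ - Real.arctan (-b/a))^2 := by
  have ht : 2 * √(a ^ 2 + k ^ 2) * |ψ - arctan (-b / a)| ≤ a := by
    rw [lt_div_iff₀ (by positivity)] at hψ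
    linarith
  have hid := cos_add_mul_eq_sin_mul (mul_sin_arctan_add_mul_cos_arctan ha.ne' b)
    (ψ - arctan (-b / a))
  rw [add_sub_cancel] at hid
  rw [hid]
  exact half_mul_sq_le_sin_mul_mul ha hb0 hbk ht

theorem stmt_13 (a k b : ℝ) (ha : 0 < a) (hk : 0 ≤ k) (hb0 : 0 ≤ b) (hbk : b ≤ k)
    (ψ : ℝ) (hψ : |ψ - Real.arctan (-b/a)| < a / (2 * Real.sqrt (a^2 + k^2))) :
    Real.cos ψ * (b * Real.cos ψ + a * Real.sin ψ) * (ψ - Real.arctan (-b/a))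
      ≥ (a/2) * (ψ - Real.arctan (-b/a))^2 :=
  stmt_13_general a k b ha hb0 hbk ψ hψ
end

section
/- Let μ ∈ ℝ, a > 0, σ > 0, and ν the measure on (0,∞) with density ρ(r) = 2r exp(−(a/(2σ²))(r² − μ/a)²)/(√(πσ²/(2a)) erfc(−μ/(σ√(2a)))). Then ∫₀^∞ r² dν(r) = μ/a + √(2σ²/(πa)) · exp(−μ²/(2aσ²)) / erfc(−μ/√(2aσ²)). -/
/-
Since `r³ = r (r² - m) + m r`, the function `r³ exp (-s² (r² - m)²)` has the elementary
antiderivative `-exp (-s² (r² - m)²) / (4 s²) - m √π / (4 s) · erfc (s (r² - m))`, which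
vanishes at `∞`; the second moment is minus its value at `0`, divided by the normalising
constant. With `s = √(a / (2σ²))` and `m = μ / a` every square root in the statement is `√π`
times a rational function of `a, σ, s`.
-/

noncomputable def erfc (x : ℝ) : ℝ :=
  (2 / Real.sqrt Real.pi) * ∫ u in Set.Ioi x, Real.exp (-u^2)

open MeasureTheory Filter Set Real Topology

section TailIntegral

variable {E : Type*} [NormedAddCommGroup E] [NormedSpace ℝ E] {f : ℝ → E}

lemma integral_Ioi_eq_sub_intervalIntegral (hf : Integrable f) :
    (fun x => ∫ t in Ioi x, f t)
      = fun x => (∫ t in Ioi 0, f t) - ∫ t in (0 : ℝ)..x, f t := by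
  ext x
  rw [← intervalIntegral.integral_Ioi_sub_Ioi' hf.integrableOn hf.integrableOn, sub_sub_cancel]

lemma tendsto_integral_Ioi_atTop (hf : Integrable f) :
    Tendsto (fun x => ∫ t in Ioi x, f t) atTop (𝓝 0) := by
  have hint := intervalIntegral_tendsto_integral_Ioi 0 hf.integrableOn tendsto_id
  rw [integral_Ioi_eq_sub_intervalIntegral hf, ← sub_self (∫ t in Ioi 0, f t)]
  exact hint.const_sub _

variable [CompleteSpace E]

lemma hasDerivAt_integral_Ioi (hf : Integrable f) {x : ℝ} (hx : ContinuousAt f x) :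
    HasDerivAt (fun y => ∫ t in Ioi y, f t) (-f x) x := by
  have hint : HasDerivAt (fun y => ∫ t in (0 : ℝ)..y, f t) (f x) x :=
    intervalIntegral.integral_hasDerivAt_right hf.intervalIntegrable
      hf.aestronglyMeasurable.stronglyMeasurableAtFilter hx
  rw [integral_Ioi_eq_sub_intervalIntegral hf]
  exact hint.const_sub _

end TailIntegral

lemma integrable_exp_neg_sq : Integrable fun u : ℝ => exp (-u ^ 2) := by
  simpa using integrable_exp_neg_mul_sq one_pos

lemma erfc_pos (x : ℝ) : 0 < erfc x := by
  refine mul_pos (by positivity) ?_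
  rw [setIntegral_pos_iff_support_of_nonneg_ae
    (Eventually.of_forall fun u => (exp_pos _).le) integrable_exp_neg_sq.integrableOn]
  simp [Function.support, (exp_pos _).ne']

lemma hasDerivAt_erfc (x : ℝ) : HasDerivAt erfc (-(2 / √π * exp (-x ^ 2))) x := by
  rw [← mul_neg]
  exact (hasDerivAt_integral_Ioi integrable_exp_neg_sq (by fun_prop)).const_mul _

lemma tendsto_erfc_atTop : Tendsto erfc atTop (𝓝 0) := by
  have h := (tendsto_integral_Ioi_atTop integrable_exp_neg_sq).const_mul (2 / √π)
  rwa [mul_zero] at h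

section ShiftedGaussian

variable {s : ℝ} (m : ℝ)

lemma hasDerivAt_antideriv_pow_three_mul_exp (hs : 0 < s) (r : ℝ) :
    HasDerivAt (fun r => -exp (-s ^ 2 * (r ^ 2 - m) ^ 2) / (4 * s ^ 2)
        - m * √π / (4 * s) * erfc (s * (r ^ 2 - m)))
      (r ^ 3 * exp (-s ^ 2 * (r ^ 2 - m) ^ 2)) r := by
  have hu : HasDerivAt (fun r : ℝ => r ^ 2 - m) (2 * r) r := by
    simpa using (hasDerivAt_pow 2 r).sub_const m
  have hv : HasDerivAt (fun r => -s ^ 2 * (r ^ 2 - m) ^ 2)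
      (-s ^ 2 * (2 * (r ^ 2 - m) * (2 * r))) r :=
    ((hu.pow 2).const_mul (-s ^ 2)).congr_deriv (by push_cast; ring)
  have hA := hv.exp.neg.div_const (4 * s ^ 2)
  have hB := ((hasDerivAt_erfc _).comp r (hu.const_mul s)).const_mul (m * √π / (4 * s))
  rw [show -(s * (r ^ 2 - m)) ^ 2 = -s ^ 2 * (r ^ 2 - m) ^ 2 by ring] at hB
  refine (hA.sub hB).congr_deriv ?_
  field_simp
  ring

lemma integral_Ioi_pow_three_mul_exp_neg_mul_sq_sub (hs : 0 < s) :
    ∫ r in Ioi 0, r ^ 3 * exp (-s ^ 2 * (r ^ 2 - m) ^ 2)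
      = exp (-s ^ 2 * m ^ 2) / (4 * s ^ 2) + m * √π / (4 * s) * erfc (-(s * m)) := by
  have hshift : Tendsto (fun r : ℝ => r ^ 2 - m) atTop atTop :=
    tendsto_atTop_add_const_right _ _ (tendsto_pow_atTop two_ne_zero)
  have hexp : Tendsto (fun r : ℝ => exp (-s ^ 2 * (r ^ 2 - m) ^ 2)) atTop (𝓝 0) :=
    tendsto_exp_atBot.comp (((tendsto_pow_atTop two_ne_zero).comp hshift).const_mul_atTop_of_neg
      (neg_lt_zero.2 (pow_pos hs 2)))
  have herfc : Tendsto (fun r : ℝ => erfc (s * (r ^ 2 - m))) atTop (𝓝 0) :=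
    tendsto_erfc_atTop.comp (hshift.const_mul_atTop hs)
  have hlim := (hexp.neg.div_const (4 * s ^ 2)).sub (herfc.const_mul (m * √π / (4 * s)))
  rw [neg_zero, zero_div, mul_zero, sub_zero] at hlim
  rw [integral_Ioi_of_hasDerivAt_of_nonneg
    (hasDerivAt_antideriv_pow_three_mul_exp m hs 0).continuousAt.continuousWithinAt
    (fun r _ => hasDerivAt_antideriv_pow_three_mul_exp m hs r)
    (fun r hr => by have : 0 < r := hr; positivity) hlim]
  rw [show ((0 : ℝ) ^ 2 - m) ^ 2 = m ^ 2 by ring, show s * ((0 : ℝ) ^ 2 - m) = -(s * m) by ring]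
  ring

lemma integral_Ioi_sq_mul_radial_density (hs : 0 < s) :
    ∫ r in Ioi 0, r ^ 2 * (2 * r * exp (-s ^ 2 * (r ^ 2 - m) ^ 2)
        / (√π / (2 * s) * erfc (-(s * m))))
      = m + exp (-s ^ 2 * m ^ 2) / (√π * s * erfc (-(s * m))) := by
  have hE := erfc_pos (-(s * m))
  set Z := √π / (2 * s) * erfc (-(s * m)) with hZ
  have hmoment : ∀ r : ℝ, r ^ 2 * (2 * r * exp (-s ^ 2 * (r ^ 2 - m) ^ 2) / Z)
      = 2 * (r ^ 3 * exp (-s ^ 2 * (r ^ 2 - m) ^ 2)) / Z := fun r => by ring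
  simp_rw [hmoment]
  rw [integral_div, integral_const_mul, integral_Ioi_pow_three_mul_exp_neg_mul_sq_sub m hs, hZ]
  field_simp
  ring

end ShiftedGaussian

theorem stmt_17 (μ a σ : ℝ) (ha : 0 < a) (hσ : 0 < σ) :
    ∫ r in Set.Ioi (0:ℝ),
        r^2 * (2 * r * Real.exp (-(a/(2*σ^2)) * (r^2 - μ/a)^2)
          / (Real.sqrt (Real.pi * σ^2 / (2*a)) * erfc (-μ/(σ * Real.sqrt (2*a)))))
      = μ/a + Real.sqrt (2*σ^2/(Real.pi*a)) * Real.exp (-μ^2/(2*a*σ^2))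
              / erfc (-μ / Real.sqrt (2*a*σ^2)) := by
  obtain ⟨s, hs, hs2⟩ : ∃ s, 0 < s ∧ s ^ 2 = a / (2 * σ ^ 2) :=
    ⟨_, sqrt_pos.2 (by positivity), sq_sqrt (by positivity)⟩
  have sqrt_eq {x y : ℝ} (hy : 0 ≤ y) (h : y ^ 2 = x) : √x = y := h ▸ sqrt_sq hy
  have h2a : √(2 * a) = a / (s * σ) :=
    sqrt_eq (by positivity) (by rw [div_pow, mul_pow, hs2]; field_simp)
  have h2aσ : √(2 * a * σ ^ 2) = a / s :=
    sqrt_eq (by positivity) (by rw [div_pow, hs2]; field_simp)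
  have hZ : √(π * σ ^ 2 / (2 * a)) = √π / (2 * s) :=
    sqrt_eq (by positivity) (by rw [div_pow, mul_pow, hs2, sq_sqrt pi_pos.le]; field_simp)
  have hC : √(2 * σ ^ 2 / (π * a)) = 1 / (√π * s) :=
    sqrt_eq (by positivity) (by rw [div_pow, mul_pow, hs2, sq_sqrt pi_pos.le]; field_simp)
  rw [h2a, h2aσ, hZ, hC, ← hs2, show -μ / (σ * (a / (s * σ))) = -(s * (μ / a)) by field_simp,
    show -μ / (a / s) = -(s * (μ / a)) by field_simp,
    show -μ ^ 2 / (2 * a * σ ^ 2) = -s ^ 2 * (μ / a) ^ 2 by rw [hs2]; field_simp,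
    integral_Ioi_sq_mul_radial_density _ hs]
  ring
end
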